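/- arXiv:1811.08181 — 4 statements merged into one kernel-verified Lean document; each statement's English description precedes it below -/
import Mathlib

section
/- For every hypergraph H, ghw(H) = 1 if and only if hw(H) = 1. -/
/-- A hypergraph: a finite set of vertices and a finite set of nonempty edges,
each of which is a subset of the vertex set. -/
structure FinHypergraph (V : Type) where
  verts : Finset V
  edges : Finset (Finset V)
  nonempty_of_mem : ∀ e ∈ edges, e.Nonempty
  subset_verts : ∀ e ∈ edges, e ⊆ verts

variable {V : Type} [DecidableEq V]

/-- The data of a (generalized) hypertree decomposition: a finite rooted tree together
with a bag `B_u` and an (integral) edge labelling `λ_u` (given as the finite set of edges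
with value 1) for each node. -/
structure Decomp (V : Type) where
  n : ℕ
  tree : SimpleGraph (Fin n)
  root : Fin n
  bag : Fin n → Finset V
  cover : Fin n → Finset (Finset V)

/-- `u'` lies in the subtree `T_u` rooted at `u`: every path from the root to `u'`
passes through `u`. -/
def Decomp.desc (D : Decomp V) (u u' : Fin D.n) : Prop :=
  ∀ p : D.tree.Path D.root u', u ∈ p.1.support

/-- `D` is a generalized hypertree decomposition (GHD) of `H`:
the tree is a tree, every edge is covered by some bag, the set of nodes containing a
given vertex is connected in the tree, each `λ_u` uses only edges of `H`, and
`B_u ⊆ B(λ_u)`. -/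
def Decomp.IsGHD (H : FinHypergraph V) (D : Decomp V) : Prop :=
  D.tree.IsTree ∧
  (∀ e ∈ H.edges, ∃ u, e ⊆ D.bag u) ∧
  (∀ v : V, (D.tree.induce {u | v ∈ D.bag u}).Preconnected) ∧
  (∀ u, D.cover u ⊆ H.edges) ∧
  (∀ u, D.bag u ⊆ (D.cover u).biUnion id)

/-- `D` is a hypertree decomposition (HD) of `H`: a GHD satisfying in addition the
special condition `V(T_u) ∩ B(λ_u) ⊆ B_u` for every node `u`. -/
def Decomp.IsHD (H : FinHypergraph V) (D : Decomp V) : Prop :=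
  D.IsGHD H ∧
  ∀ u u', D.desc u u' → ∀ v ∈ D.bag u', v ∈ (D.cover u).biUnion id → v ∈ D.bag u

/-- The generalized hypertree width of `H`: the least `k` such that `H` has a GHD all of
whose labels `λ_u` have weight (cardinality) at most `k`. -/
noncomputable def ghw (H : FinHypergraph V) : ℕ :=
  sInf {k | ∃ D : Decomp V, D.IsGHD H ∧ ∀ u, (D.cover u).card ≤ k}

/-- The hypertree width of `H`: the least `k` such that `H` has an HD all of whose
labels `λ_u` have weight (cardinality) at most `k`. -/
noncomputable def hw (H : FinHypergraph V) : ℕ :=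
  sInf {k | ∃ D : Decomp V, D.IsHD H ∧ ∀ u, (D.cover u).card ≤ k}

/-!
A GHD of width one is a tree decomposition each of whose bags lies inside an edge. Pruning leaves
one at a time lists its bags so that each one meets the bags listed after it only inside its
parent. GYO ear removal (delete an edge contained in another one, delete an edge whose
intersection with the rest lies in a single other edge, drop or merge the last-added bag) turns
such a list into a listing of exactly the edges of `H` with the same property: a join tree. A join
tree in which every node is covered by its own edge is an HD of width one, because there
`B(λ_u) = B_u` and the special condition holds trivially. Width zero is possible, for GHDs and HDs
alike, exactly when `H` has no edges.
-/

open SimpleGraph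

/-- The head of the list is the node added last and `C` is its parent, so the list describes a
rooted tree whose bags satisfy the connectivity condition. -/
inductive RunningIntersection : List (Finset V) → Prop
  | singleton (B : Finset V) : RunningIntersection [B]
  | cons {B C : Finset V} {L : List (Finset V)} :
      RunningIntersection L → C ∈ L → (∀ X ∈ L, B ∩ X ⊆ C) → RunningIntersection (B :: L)

namespace RunningIntersection

variable {L : List (Finset V)}

theorem map_inter (h : RunningIntersection L) (S : Finset V) :
    RunningIntersection (L.map (· ∩ S)) := by
  induction h with
  | singleton B => exact .singleton _
  | cons _ hC hB ih =>
    refine .cons ih (List.mem_map_of_mem hC) ?_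
    simp only [List.mem_map, forall_exists_index, and_imp, forall_apply_eq_imp_iff₂]
    intro X hX v hv
    simp only [Finset.mem_inter] at hv ⊢
    exact ⟨hB X hX (Finset.mem_inter.2 ⟨hv.1.1, hv.2.1⟩), hv.1.2⟩

theorem map_replace {B C : Finset V} (h : RunningIntersection L) (hCB : C ⊆ B)
    (hB : ∀ X ∈ L, B ∩ X ⊆ C) :
    RunningIntersection (L.map fun X => if X = C then B else X) := by
  induction h with
  | singleton Y => exact .singleton _
  | @cons Y P L _ hP hY ih =>
    have hB' : ∀ X ∈ L, B ∩ X ⊆ C := fun X hX => hB X (List.mem_cons_of_mem _ hX)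
    by_cases hYC : Y = C ∧ C ∈ L
    · refine .cons (ih hB') (List.mem_map.2 ⟨C, hYC.2, if_pos rfl⟩) ?_
      simp [hYC.1]
    · refine .cons (ih hB') (List.mem_map_of_mem hP) ?_
      simp only [List.mem_map, forall_exists_index, and_imp, forall_apply_eq_imp_iff₂]
      intro X hX v hv
      refine (show P ⊆ if P = C then B else P by split_ifs <;> simp_all) (hY X hX ?_)
      have hBX := hB X (List.mem_cons_of_mem _ hX)
      have hBY := hB Y List.mem_cons_self
      simp only [Finset.subset_iff, Finset.mem_inter] at hBX hBY hv ⊢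
      split_ifs at hv <;> grind

theorem exists_parent (h : RunningIntersection L) :
    ∃ p : Fin L.length → Fin L.length, ∀ i k, i < k → i < p i ∧ L[i] ∩ L[k] ⊆ L[p i] := by
  induction h with
  | singleton B => exact ⟨id, fun i k hik => (hik.ne (Subsingleton.elim (α := Fin 1) i k)).elim⟩
  | @cons B C L hL hC hBC ih =>
    obtain ⟨p, hp⟩ := ih
    obtain ⟨c, rfl⟩ := List.mem_iff_get.1 hC
    refine ⟨Fin.cons c.succ fun i => (p i).succ, fun i k hik => ?_⟩
    induction k using Fin.cases with
    | zero => exact absurd hik (Fin.not_lt_zero _)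
    | succ k =>
      induction i using Fin.cases with
      | zero => exact ⟨Fin.succ_pos _, by simpa using hBC L[k] (List.getElem_mem _)⟩
      | succ i =>
        obtain ⟨h1, h2⟩ := hp i k (Fin.succ_lt_succ_iff.1 hik)
        exact ⟨Fin.succ_lt_succ_iff.2 h1, by simpa using h2⟩

end RunningIntersection

def IsRIPCover (F : Finset (Finset V)) (L : List (Finset V)) : Prop :=
  RunningIntersection L ∧ (∀ B ∈ L, ∃ f ∈ F, B ⊆ f) ∧ ∀ e ∈ F, ∃ B ∈ L, e ⊆ B

def IsRIPOrdering (F : Finset (Finset V)) (L : List (Finset V)) : Prop :=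
  RunningIntersection L ∧ ∀ e, e ∈ L ↔ e ∈ F

def IsEar (F : Finset (Finset V)) (e f : Finset V) : Prop :=
  f ∈ F.erase e ∧ ∀ g ∈ F.erase e, e ∩ g ⊆ f

variable {F : Finset (Finset V)} {L : List (Finset V)} {e f : Finset V}

theorem IsEar.of_ssubset (hef : e ⊂ f) (hf : f ∈ F) : IsEar F e f :=
  ⟨Finset.mem_erase.2 ⟨hef.ne', hf⟩, fun _ _ => Finset.inter_subset_left.trans hef.subset⟩

theorem IsRIPCover.erase_ear (h : IsRIPCover F L) (hear : IsEar F e f) :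
    IsRIPCover (F.erase e) (L.map (· ∩ (F.erase e).sup id)) := by
  obtain ⟨hL, hbag, hcov⟩ := h
  refine ⟨hL.map_inter _, ?_, fun g hg => ?_⟩
  · simp only [List.mem_map, forall_exists_index, and_imp, forall_apply_eq_imp_iff₂]
    intro B hB
    obtain ⟨f', hf', hBf'⟩ := hbag B hB
    by_cases hfe : f' = e
    · refine ⟨f, hear.1, fun v hv => ?_⟩
      obtain ⟨g, hg, hvg⟩ := Finset.mem_sup.1 (Finset.mem_inter.1 hv).2
      exact hear.2 g hg (Finset.mem_inter.2 ⟨hfe ▸ hBf' (Finset.mem_inter.1 hv).1, hvg⟩)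
    · exact ⟨f', Finset.mem_erase.2 ⟨hfe, hf'⟩, Finset.inter_subset_left.trans hBf'⟩
  · obtain ⟨B, hB, hgB⟩ := hcov g (Finset.mem_of_mem_erase hg)
    exact ⟨_, List.mem_map_of_mem hB, Finset.subset_inter hgB (Finset.le_sup (f := id) hg)⟩

theorem IsRIPOrdering.cons_ear (h : IsRIPOrdering (F.erase e) L) (he : e ∈ F)
    (hear : IsEar F e f) : IsRIPOrdering F (e :: L) := by
  refine ⟨.cons h.1 ((h.2 f).2 hear.1) fun X hX => hear.2 X ((h.2 X).1 hX), fun g => ?_⟩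
  rw [List.mem_cons, h.2, Finset.mem_erase]
  constructor
  · rintro (rfl | ⟨-, hg⟩) <;> assumption
  · intro hg
    by_cases hge : g = e
    · exact .inl hge
    · exact .inr ⟨hge, hg⟩

theorem IsRIPCover.exists_isRIPOrdering_singleton {B : Finset V} (h : IsRIPCover F [B])
    (hF : IsAntichain (· ⊆ ·) (F : Set (Finset V))) : ∃ f, IsRIPOrdering F [f] := by
  obtain ⟨-, hbag, hcov⟩ := h
  obtain ⟨f, hf, hBf⟩ := hbag B List.mem_cons_self
  refine ⟨f, .singleton f, fun g => ⟨fun hg => (List.mem_singleton.1 hg) ▸ hf, fun hg => ?_⟩⟩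
  obtain ⟨B', hB', hgB'⟩ := hcov g hg
  rw [List.mem_singleton.1 hB'] at hgB'
  exact List.mem_singleton.2 (hF.eq hg hf (hgB'.trans hBf))

theorem IsRIPCover.tail {B : Finset V} (h : IsRIPCover F (B :: L)) (hL : RunningIntersection L)
    (hB : ∀ g ∈ F, ¬g ⊆ B) : IsRIPCover F L := by
  obtain ⟨-, hbag, hcov⟩ := h
  refine ⟨hL, fun X hX => hbag X (List.mem_cons_of_mem _ hX), fun g hg => ?_⟩
  obtain ⟨X, hX, hgX⟩ := hcov g hg
  rcases List.mem_cons.1 hX with rfl | hX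
  · exact absurd hgX (hB g hg)
  · exact ⟨X, hX, hgX⟩

theorem IsRIPCover.contract_head {B C : Finset V} (h : IsRIPCover F (B :: L)) (hB : B ∈ F)
    (hL : RunningIntersection L) (hC : C ∈ L) (hBC : ∀ X ∈ L, B ∩ X ⊆ C) (hCB : C ⊆ B) :
    IsRIPCover F (L.map fun X => if X = C then B else X) := by
  obtain ⟨-, hbag, hcov⟩ := h
  refine ⟨hL.map_replace hCB hBC, ?_, fun g hg => ?_⟩
  · simp only [List.mem_map, forall_exists_index, and_imp, forall_apply_eq_imp_iff₂]
    intro X hX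
    split_ifs
    · exact ⟨B, hB, subset_rfl⟩
    · exact hbag X (List.mem_cons_of_mem _ hX)
  · obtain ⟨X, hX, hgX⟩ := hcov g hg
    rcases List.mem_cons.1 hX with rfl | hX
    · exact ⟨X, List.mem_map.2 ⟨C, hC, if_pos rfl⟩, hgX⟩
    · refine ⟨_, List.mem_map_of_mem hX, hgX.trans ?_⟩
      split_ifs with hXC
      · exact hXC ▸ hCB
      · exact subset_rfl

theorem IsRIPCover.isEar_head {B C f : Finset V} (h : IsRIPCover F (B :: L))
    (hF : IsAntichain (· ⊆ ·) (F : Set (Finset V))) (hB : B ∈ F) (hBC : ∀ X ∈ L, B ∩ X ⊆ C)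
    (hf : f ∈ F) (hfB : f ≠ B) (hCf : C ⊆ f) : IsEar F B f := by
  refine ⟨Finset.mem_erase.2 ⟨hfB, hf⟩, fun g hg => ?_⟩
  obtain ⟨X, hX, hgX⟩ := h.2.2 g (Finset.mem_of_mem_erase hg)
  rcases List.mem_cons.1 hX with rfl | hX
  · exact absurd (hF.eq (Finset.mem_of_mem_erase hg) hB hgX) (Finset.ne_of_mem_erase hg)
  · exact (Finset.inter_subset_inter_left hgX).trans ((hBC X hX).trans hCf)

theorem IsRIPCover.exists_isRIPOrdering (h : IsRIPCover F L) : ∃ J, IsRIPOrdering F J := by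
  induction hN : L.length + F.card using Nat.strong_induction_on generalizing F L with
  | _ N ih =>
  subst hN
  by_cases hF : IsAntichain (· ⊆ ·) (F : Set (Finset V))
  swap
  · obtain ⟨g, hg, f, hf, hgf, hsub⟩ : ∃ g ∈ F, ∃ f ∈ F, g ≠ f ∧ g ⊆ f := by
      simpa [IsAntichain, Set.Pairwise] using hF
    have hear := IsEar.of_ssubset (hsub.ssubset_of_ne hgf) hf
    obtain ⟨J, hJ⟩ := ih _ (by simp [Finset.card_erase_lt_of_mem hg]) (h.erase_ear hear) rfl
    exact ⟨g :: J, hJ.cons_ear hg hear⟩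
  obtain ⟨hRIP, hbag, hcov⟩ := h
  cases hRIP with
  | singleton B =>
    obtain ⟨f, hf⟩ := IsRIPCover.exists_isRIPOrdering_singleton ⟨.singleton B, hbag, hcov⟩ hF
    exact ⟨[f], hf⟩
  | @cons B C L hL hC hBC =>
    have h : IsRIPCover F (B :: L) := ⟨.cons hL hC hBC, hbag, hcov⟩
    by_cases hB : ∀ g ∈ F, ¬g ⊆ B
    · exact ih _ (by simp) (h.tail hL hB) rfl
    obtain ⟨e, he, heB⟩ : ∃ e ∈ F, e ⊆ B := by simpa using hB
    obtain ⟨f, hf, hBf⟩ := hbag B List.mem_cons_self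
    -- `e ⊆ B ⊆ f` and `F` is an antichain
    obtain rfl : B = e := (hBf.trans (hF.eq he hf (heB.trans hBf)).ge).antisymm heB
    obtain ⟨f', hf', hCf'⟩ := hbag C (List.mem_cons_of_mem _ hC)
    by_cases hf'B : f' = B
    · subst hf'B
      exact ih _ (by simp) (h.contract_head he hL hC hBC hCf') rfl
    · have hear := h.isEar_head hF he hBC hf' hf'B hCf'
      obtain ⟨J, hJ⟩ := ih _ (by simp [Finset.card_erase_lt_of_mem he]) (h.erase_ear hear) rfl
      exact ⟨B :: J, hJ.cons_ear he hear⟩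

section TreeOrdering

variable {W : Type*} {G : SimpleGraph W}

theorem exists_adj_of_preconnected_induce {S : Set W} (hS : (G.induce S).Preconnected)
    {x w : W} (hx : x ∈ S) (hw : w ∈ S) (hxw : x ≠ w) : ∃ z ∈ S, G.Adj x z := by
  obtain ⟨q⟩ := hS ⟨x, hx⟩ ⟨w, hw⟩
  exact ⟨q.snd, q.snd.2, q.adj_snd (Walk.not_nil_of_ne (by simpa using hxw))⟩

theorem preconnected_induce_compl_of_subsingleton {x : W} (hx : (G.neighborSet x).Subsingleton)
    {S : Set W} (hS : (G.induce S).Preconnected) :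
    ((G.induce {x}ᶜ).induce {w | w.1 ∈ S}).Preconnected := by
  have h := hS.induce_of_degree_eq_one (s := {w | w.1 ≠ x}) fun w hw a ha c hc => by
    obtain rfl : w.1 = x := by simpa using hw
    exact Subtype.ext (hx ha hc)
  exact h.map ⟨fun w => ⟨⟨w.1.1, w.2⟩, w.1.2⟩, id⟩ fun w => ⟨⟨⟨w.1.1, w.2⟩, w.1.2⟩, rfl⟩

theorem SimpleGraph.IsTree.exists_runningIntersection [Finite W] (hG : G.IsTree)
    (b : W → Finset V) (hb : ∀ v, (G.induce {w | v ∈ b w}).Preconnected) :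
    ∃ l : List W, (∀ w, w ∈ l) ∧ RunningIntersection (l.map b) := by
  refine Finite.induction_subsingleton_or_nontrivial (P := fun W => ∀ (G : SimpleGraph W),
    G.IsTree → ∀ b : W → Finset V, (∀ v, (G.induce {w | v ∈ b w}).Preconnected) →
    ∃ l : List W, (∀ w, w ∈ l) ∧ RunningIntersection (l.map b)) W ?_ ?_ G hG b hb
  · intro W _ _ G hG b _
    obtain ⟨w⟩ := hG.connected.nonempty
    exact ⟨[w], fun w' => by simp [Subsingleton.elim w' w], .singleton _⟩
  intro W _ _ ih G hG b hb
  classical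
  have := Fintype.ofFinite W
  obtain ⟨x, hx⟩ := hG.exists_vert_degree_one_of_nontrivial
  obtain ⟨y, hxy, hy⟩ := degree_eq_one_iff_existsUnique_adj.1 hx
  have hT : (G.induce {x}ᶜ).IsTree :=
    ⟨hG.connected.induce_compl_singleton_of_degree_eq_one hx, hG.isAcyclic.induce _⟩
  obtain ⟨l, hl, hRIP⟩ := ih _ (Finite.card_subtype_lt (x := x) (by simp)) _ hT (b ∘ Subtype.val)
    fun v => preconnected_induce_compl_of_subsingleton
      (fun a ha c hc => (hy a ha).trans (hy c hc).symm) (hb v)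
  refine ⟨x :: l.map Subtype.val, fun w => ?_, ?_⟩
  · rcases eq_or_ne w x with rfl | hw
    · exact List.mem_cons_self
    · exact List.mem_cons_of_mem _ (List.mem_map_of_mem (hl ⟨w, hw⟩))
  · rw [List.map_cons, List.map_map]
    refine .cons hRIP (List.mem_map_of_mem (hl ⟨y, hxy.ne'⟩)) ?_
    simp only [List.mem_map, forall_exists_index, and_imp, forall_apply_eq_imp_iff₂]
    intro w _ v hv
    rw [Finset.mem_inter] at hv
    obtain ⟨z, hz, hxz⟩ := exists_adj_of_preconnected_induce (hb v) hv.1 hv.2 (Ne.symm w.2)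
    exact hy z hxz ▸ hz

end TreeOrdering

section ParentGraph

def parentGraph {W : Type*} (p : W → W) (r : W) : SimpleGraph W :=
  SimpleGraph.fromRel fun i j => i ≠ r ∧ p i = j

variable {W : Type*} [LinearOrder W] {p : W → W} {r : W}

theorem parentGraph_adj_parent {i : W} (hp : i < p i) (hi : i ≠ r) :
    (parentGraph p r).Adj i (p i) :=
  (fromRel_adj _ _ _).2 ⟨hp.ne, .inl ⟨hi, rfl⟩⟩

variable [WellFoundedGT W]

theorem parentGraph_reachable_root (hp : ∀ i ≠ r, i < p i) (i : W) :
    (parentGraph p r).Reachable i r := by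
  induction i using WellFoundedGT.induction with
  | _ i ih =>
  rcases eq_or_ne i r with rfl | hi
  · rfl
  · exact (parentGraph_adj_parent (hp i hi) hi).reachable.trans (ih _ (hp i hi))

theorem le_root_of_lt_parent (hp : ∀ i ≠ r, i < p i) (i : W) : i ≤ r := by
  induction i using WellFoundedGT.induction with
  | _ i ih =>
  rcases eq_or_ne i r with rfl | hi
  · rfl
  · exact (hp i hi).le.trans (ih _ (hp i hi))

theorem parentGraph_isTree [Finite W] (hp : ∀ i ≠ r, i < p i) : (parentGraph p r).IsTree := by
  classical
  have := Fintype.ofFinite W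
  rw [isTree_iff_connected_and_card]
  refine ⟨(connected_iff _).2 ⟨fun i j => (parentGraph_reachable_root hp i).trans
    (parentGraph_reachable_root hp j).symm, ⟨r⟩⟩, ?_⟩
  have e : {i // i ≠ r} ≃ (parentGraph p r).edgeSet := by
    refine Equiv.ofBijective (fun i => ⟨s(i.1, p i.1), parentGraph_adj_parent (hp i.1 i.2) i.2⟩)
      ⟨fun i j hij => Subtype.ext ?_, ?_⟩
    · rcases Sym2.eq_iff.1 (congrArg Subtype.val hij) with ⟨h, -⟩ | ⟨h1, h2⟩
      · exact h
      · have := (hp i.1 i.2).trans_eq h2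
        have := (hp j.1 j.2).trans_eq h1.symm
        exact absurd ‹j.1 < i.1› (lt_asymm ‹i.1 < j.1›)
    · rintro ⟨e, he⟩
      induction e using Sym2.ind with
      | _ a b =>
      obtain ⟨hab, ⟨ha, rfl⟩ | ⟨hb, rfl⟩⟩ := (fromRel_adj _ _ _).1 ((mem_edgeSet _).1 he)
      · exact ⟨⟨a, ha⟩, rfl⟩
      · exact ⟨⟨b, hb⟩, Subtype.ext Sym2.eq_swap⟩
  rw [← Nat.card_congr e, Nat.card_eq_fintype_card, Nat.card_eq_fintype_card,
    Fintype.card_subtype_compl, Fintype.card_subtype_eq]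
  have : 0 < Fintype.card W := Fintype.card_pos_iff.2 ⟨r⟩
  omega

theorem parentGraph_induce_preconnected (hp : ∀ i ≠ r, i < p i) {S : Set W}
    (hS : ∀ i ∈ S, ∀ k ∈ S, i < k → p i ∈ S) : ((parentGraph p r).induce S).Preconnected := by
  suffices h : ∀ i (hi : i ∈ S) k (hk : k ∈ S), i < k →
      ((parentGraph p r).induce S).Reachable ⟨i, hi⟩ ⟨k, hk⟩ by
    rintro ⟨i, hi⟩ ⟨k, hk⟩
    rcases lt_trichotomy i k with hik | rfl | hki
    · exact h i hi k hk hik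
    · rfl
    · exact (h k hk i hi hki).symm
  intro i
  induction i using WellFoundedGT.induction with
  | _ i ih =>
  intro hi k hk hik
  have hir : i ≠ r := fun h => (le_root_of_lt_parent hp k).not_gt (h ▸ hik)
  have hpi := hS i hi k hk hik
  have hadj : ((parentGraph p r).induce S).Adj ⟨i, hi⟩ ⟨p i, hpi⟩ :=
    parentGraph_adj_parent (hp i hir) hir
  rcases lt_trichotomy (p i) k with h | h | h
  · exact hadj.reachable.trans (ih _ (hp i hir) hpi k hk h)
  · subst h
    exact hadj.reachable
  · exact hadj.reachable.trans (ih k hik hk _ hpi h).symm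

end ParentGraph

theorem IsRIPOrdering.exists_isHD {H : FinHypergraph V} {J : List (Finset V)}
    (h : IsRIPOrdering H.edges J) : ∃ D : Decomp V, D.IsHD H ∧ ∀ u, (D.cover u).card ≤ 1 := by
  obtain ⟨p, hp⟩ := h.1.exists_parent
  have hpos : 0 < J.length := by cases h.1 <;> simp
  let r : Fin J.length := ⟨J.length - 1, by omega⟩
  have hpr : ∀ i ≠ r, i < p i := fun i hi =>
    (hp i r (lt_of_le_of_ne (Fin.le_def.2 (by simp only [r]; omega)) hi)).1
  refine ⟨⟨J.length, parentGraph p r, r, fun i => J[i], fun i => {J[i]}⟩,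
    ⟨⟨parentGraph_isTree hpr, fun e he => ?_,
      fun v => parentGraph_induce_preconnected hpr fun i hi k hk hik => ?_, fun u => ?_,
      fun u => ?_⟩, fun u _ _ v _ hv => ?_⟩, fun u => ?_⟩
  · obtain ⟨i, rfl⟩ := List.mem_iff_get.1 ((h.2 e).2 he)
    exact ⟨i, subset_rfl⟩
  · exact (hp i k hik).2 (Finset.mem_inter.2 ⟨hi, hk⟩)
  · simpa using (h.2 _).1 (List.getElem_mem _)
  · simp
  · simpa using hv
  · simp

theorem FinHypergraph.exists_isHD_of_edges_eq_empty {H : FinHypergraph V} (h : H.edges = ∅) :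
    ∃ D : Decomp V, D.IsHD H ∧ ∀ u, (D.cover u).card ≤ 0 := by
  refine ⟨⟨1, ⊥, 0, fun _ => ∅, fun _ => ∅⟩, ⟨⟨.of_subsingleton, by simp [h],
    fun _ => .of_subsingleton, by simp, by simp⟩, by simp⟩, by simp⟩

theorem Decomp.IsGHD.edges_eq_empty {H : FinHypergraph V} {D : Decomp V} (hD : D.IsGHD H)
    (h0 : ∀ u, (D.cover u).card ≤ 0) : H.edges = ∅ := by
  refine Finset.eq_empty_of_forall_notMem fun e he => ?_
  obtain ⟨u, heu⟩ := hD.2.1 e he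
  obtain ⟨v, hv⟩ := H.nonempty_of_mem e he
  have := hD.2.2.2.2 u (heu hv)
  simp_all

theorem Decomp.IsGHD.exists_edge_superset_bag {H : FinHypergraph V} {D : Decomp V}
    (hD : D.IsGHD H) (h1 : ∀ u, (D.cover u).card ≤ 1) (hne : H.edges.Nonempty) (u : Fin D.n) :
    ∃ f ∈ H.edges, D.bag u ⊆ f := by
  obtain ⟨f, hf⟩ := Finset.card_le_one_iff_subset_singleton.1 (h1 u)
  have hbag := hD.2.2.2.2 u
  rcases Finset.subset_singleton_iff.1 hf with h | h
  · obtain ⟨g, hg⟩ := hne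
    exact ⟨g, hg, by simp_all⟩
  · exact ⟨f, hD.2.2.2.1 u (h ▸ Finset.mem_singleton_self f), by simpa [h] using hbag⟩

theorem Decomp.IsGHD.exists_isHD_of_width_le_one {H : FinHypergraph V} {D : Decomp V}
    (hD : D.IsGHD H) (h1 : ∀ u, (D.cover u).card ≤ 1) :
    ∃ D' : Decomp V, D'.IsHD H ∧ ∀ u, (D'.cover u).card ≤ 1 := by
  rcases H.edges.eq_empty_or_nonempty with h0 | hne
  · obtain ⟨D', hD', h⟩ := FinHypergraph.exists_isHD_of_edges_eq_empty h0
    exact ⟨D', hD', fun u => (h u).trans zero_le_one⟩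
  obtain ⟨l, hl, hRIP⟩ := hD.1.exists_runningIntersection D.bag hD.2.2.1
  have hcover : IsRIPCover H.edges (l.map D.bag) := by
    refine ⟨hRIP, fun B hB => ?_, fun e he => ?_⟩
    · obtain ⟨u, -, rfl⟩ := List.mem_map.1 hB
      exact hD.exists_edge_superset_bag h1 hne u
    · obtain ⟨u, hu⟩ := hD.2.1 e he
      exact ⟨_, List.mem_map_of_mem (hl u), hu⟩
  obtain ⟨J, hJ⟩ := hcover.exists_isRIPOrdering
  exact hJ.exists_isHD

theorem Decomp.sInf_width_eq_one_iff {U : Type} (P : Decomp U → Prop) :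
    sInf {k | ∃ D, P D ∧ ∀ u, (D.cover u).card ≤ k} = 1 ↔
      (∃ D, P D ∧ ∀ u, (D.cover u).card ≤ 1) ∧ ¬∃ D, P D ∧ ∀ u, (D.cover u).card ≤ 0 :=
  Nat.sInf_upward_closed_eq_succ_iff
    (by rintro _ _ hk ⟨D, hD, h⟩; exact ⟨D, hD, fun u => (h u).trans hk⟩) 0

/-- For every hypergraph `H`: `ghw(H) = 1` iff `hw(H) = 1`. -/
theorem ghw_eq_one_iff_hw_eq_one (H : FinHypergraph V) :
    ghw H = 1 ↔ hw H = 1 := by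
  rw [ghw, hw, Decomp.sInf_width_eq_one_iff, Decomp.sInf_width_eq_one_iff]
  constructor
  · rintro ⟨⟨D, hD, h1⟩, h0⟩
    exact ⟨hD.exists_isHD_of_width_le_one h1, fun ⟨D', hD', h⟩ => h0 ⟨D', hD'.1, h⟩⟩
  · rintro ⟨⟨D, hD, h1⟩, h0⟩
    exact ⟨⟨D, hD.1, h1⟩, fun ⟨D', hD', h⟩ =>
      h0 (FinHypergraph.exists_isHD_of_edges_eq_empty (hD'.edges_eq_empty h))⟩
end

section
/- Gluing lemma for GHDs: Let H be a hypergraph, k ≥ 1, and B ⊆ V(H) such that there exists λ: E(H) → {0,1} with weight(λ) ≤ k and B ⊆ B(λ). Let C_1, …, C_ℓ be the connected components of the subhypergraph of H induced on V(H) \ B, and for each i set E_i = {e ∈ E(H) : e ∩ C_i ≠ ∅}, V_i = B ∪ ⋃_{e ∈ E_i} e, and H_i = (V_i, E_i ∪ {B}). Suppose that for each i the hypergraph H_i has a GHD D_i of width ≤ k containing a leaf node t_i with bag B_{t_i} = B and λ_{t_i} assigning value 1 only to the edge B, and in which no node other than t_i assigns positive λ-value to the edge B. Then H has a GHD of width ≤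 k (obtained by taking a root node u with bag B and label λ, rerooting each D_i at t_i, deleting t_i, and attaching the children of each t_i as children of u). -/
variable {V : Type} [DecidableEq V]

/-- Connectivity in the subhypergraph of `H` induced on the vertex set `W`:
`x` and `y` are joined by a path each of whose steps stays in `W` and is witnessed by an
edge of `H` containing both endpoints. -/
def HConn (H : FinHypergraph V) (W : Finset V) : V → V → Prop :=
  Relation.ReflTransGen (fun a b => a ∈ W ∧ b ∈ W ∧ ∃ e ∈ H.edges, a ∈ e ∧ b ∈ e)

/-- `C` is a connected component of the subhypergraph of `H` induced on `W`:
a maximal nonempty set of vertices of `W` that are pairwise connected within `W`. -/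
def IsComponent (H : FinHypergraph V) (W : Finset V) (C : Finset V) : Prop :=
  C.Nonempty ∧ C ⊆ W ∧
  (∀ x ∈ C, ∀ y ∈ C, HConn H W x y) ∧
  (∀ x ∈ C, ∀ y ∈ W, HConn H W x y → y ∈ C)

/-! The decomposition of `H` is grown one component at a time, keeping a root with bag `B` and
label `λ`. To attach the decomposition `D_C` of `H_C`, join the root by a new tree edge to the
node `t_C` and give `t_C` the label `λ` of the root instead of `{B}` (rather than deleting `t_C`);
since no other node of `D_C` uses the edge `B`, all labels then consist of edges of `H`.
Every bag vertex of `D_C` lies in an edge of `H_C`, so a vertex outside `B` occurring in `D_C`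
lies in `C`. Components being disjoint, the glued parts share only vertices of `B`, which occur
at both ends of the new tree edge; hence the nodes containing a given vertex stay connected. -/

namespace SimpleGraph

variable {α β : Type*} {G : SimpleGraph α} {H : SimpleGraph β}

lemma Reachable.of_sum_inl {a b : α} (h : (G ⊕g H).Reachable (.inl a) (.inl b)) :
    G.Reachable a b := by
  rw [reachable_iff_reflTransGen] at h ⊢
  refine h.lift' (Sum.elim id fun _ => a) ?_
  rintro (x | x) (y | y) hxy
  · exact .single hxy
  · simp at hxy
  · simp at hxy
  · exact .refl

lemma Reachable.of_sum_inr {a b : β} (h : (G ⊕g H).Reachable (.inr a) (.inr b)) :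
    H.Reachable a b :=
  (h.map Iso.sumComm.toHom).of_sum_inl (H := G)

lemma IsAcyclic.sum (hG : G.IsAcyclic) (hH : H.IsAcyclic) : (G ⊕g H).IsAcyclic := by
  rw [isAcyclic_iff_forall_adj_isBridge] at hG hH ⊢
  rintro (a | a) (b | b) hab
  · have hdel : (G ⊕g H).deleteEdges {s(.inl a, .inl b)} = G.deleteEdges {s(a, b)} ⊕g H := by
      ext (x | x) (y | y) <;> simp
    rw [isBridge_iff, hdel]
    exact fun h => hG hab h.of_sum_inl
  · simp at hab
  · simp at hab
  · have hdel : (G ⊕g H).deleteEdges {s(.inr a, .inr b)} = G ⊕g H.deleteEdges {s(a, b)} := by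
      ext (x | x) (y | y) <;> simp
    rw [isBridge_iff, hdel]
    exact fun h => hH hab h.of_sum_inr

lemma IsTree.sum_sup_edge (hG : G.IsTree) (hH : H.IsTree) (r : α) (t : β) :
    ((G ⊕g H) ⊔ edge (Sum.inl r) (Sum.inr t)).IsTree :=
  ⟨hG.connected.sum_sup_edge hH.connected,
    (hG.isAcyclic.sum hH.isAcyclic).sup_edge_of_not_reachable (not_reachable_sum_inl_inr _ _)⟩

lemma Preconnected.induce_sum_sup_edge {r : α} {t : β} {s : Set (α ⊕ β)}
    (hG : (G.induce (Sum.inl ⁻¹' s)).Preconnected)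
    (hH : (H.induce (Sum.inr ⁻¹' s)).Preconnected)
    (hs : ∀ a b, Sum.inl a ∈ s → Sum.inr b ∈ s → Sum.inl r ∈ s ∧ Sum.inr t ∈ s) :
    (((G ⊕g H) ⊔ edge (Sum.inl r) (Sum.inr t)).induce s).Preconnected := by
  set K := (G ⊕g H) ⊔ edge (Sum.inl r) (Sum.inr t)
  have left (a b : α) (ha : Sum.inl a ∈ s) (hb : Sum.inl b ∈ s) :
      (K.induce s).Reachable ⟨_, ha⟩ ⟨_, hb⟩ :=
    (hG ⟨a, ha⟩ ⟨b, hb⟩).map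
      (induceHom ((Hom.ofLE le_sup_left).comp Embedding.sumInl.toHom) fun _ hx => hx)
  have right (a b : β) (ha : Sum.inr a ∈ s) (hb : Sum.inr b ∈ s) :
      (K.induce s).Reachable ⟨_, ha⟩ ⟨_, hb⟩ :=
    (hH ⟨a, ha⟩ ⟨b, hb⟩).map
      (induceHom ((Hom.ofLE le_sup_left).comp Embedding.sumInr.toHom) fun _ hx => hx)
  have cross (a : α) (b : β) (ha : Sum.inl a ∈ s) (hb : Sum.inr b ∈ s) :
      (K.induce s).Reachable ⟨_, ha⟩ ⟨_, hb⟩ := by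
    obtain ⟨hr, ht⟩ := hs a b ha hb
    have hrt : (K.induce s).Adj ⟨_, hr⟩ ⟨_, ht⟩ := by simp [K, edge]
    exact (left a r ha hr).trans (hrt.reachable.trans (right t b ht hb))
  rintro ⟨a | a, ha⟩ ⟨b | b, hb⟩
  · exact left a b ha hb
  · exact cross a b ha hb
  · exact (cross b a hb ha).symm
  · exact right a b ha hb

lemma Iso.preconnected_induce {G' : SimpleGraph β} (e : G ≃g G') {s : Set α} {s' : Set β}
    (hs : ∀ x, e x ∈ s' ↔ x ∈ s) (h : (G.induce s).Preconnected) :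
    (G'.induce s').Preconnected :=
  h.map (induceHom e.toHom fun x hx => (hs x).mpr hx) fun y =>
    ⟨⟨e.symm y, (hs _).mp (by simp)⟩, Subtype.ext (e.apply_symm_apply y)⟩

end SimpleGraph

open SimpleGraph

namespace Decomp

def glue {α : Type} (D D' : Decomp α) (t : Fin D'.n) : Decomp α where
  n := D.n + D'.n
  tree := ((D.tree ⊕g D'.tree) ⊔ edge (Sum.inl D.root) (Sum.inr t)).map finSumFinEquiv
  root := Fin.castAdd D'.n D.root
  bag := Fin.addCases D.bag D'.bag
  cover := Fin.addCases D.cover D'.cover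

variable {α : Type} {D D' : Decomp α} {t : Fin D'.n}

@[simp] lemma glue_root : (D.glue D' t).root = Fin.castAdd D'.n D.root := rfl

@[simp] lemma glue_bag_castAdd (a : Fin D.n) :
    (D.glue D' t).bag (Fin.castAdd D'.n a) = D.bag a := by
  simp [glue]

@[simp] lemma glue_bag_natAdd (b : Fin D'.n) :
    (D.glue D' t).bag (Fin.natAdd D.n b) = D'.bag b := by
  simp [glue]

@[simp] lemma glue_cover_castAdd (a : Fin D.n) :
    (D.glue D' t).cover (Fin.castAdd D'.n a) = D.cover a := by
  simp [glue]

@[simp] lemma glue_cover_natAdd (b : Fin D'.n) :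
    (D.glue D' t).cover (Fin.natAdd D.n b) = D'.cover b := by
  simp [glue]

lemma glue_isTree (hD : D.tree.IsTree) (hD' : D'.tree.IsTree) : (D.glue D' t).tree.IsTree :=
  (Iso.map finSumFinEquiv _).isTree_iff.mp (hD.sum_sup_edge hD' _ _)

lemma glue_preconnected {v : α} (hD : (D.tree.induce {u | v ∈ D.bag u}).Preconnected)
    (hD' : (D'.tree.induce {u | v ∈ D'.bag u}).Preconnected)
    (hv : ∀ a b, v ∈ D.bag a → v ∈ D'.bag b → v ∈ D.bag D.root ∧ v ∈ D'.bag t) :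
    ((D.glue D' t).tree.induce {u | v ∈ (D.glue D' t).bag u}).Preconnected := by
  refine (Iso.map finSumFinEquiv _).preconnected_induce (s := {x | v ∈ Sum.elim D.bag D'.bag x})
    ?_ (Preconnected.induce_sum_sup_edge hD hD' hv)
  rintro (a | b)
  · exact iff_of_eq (congrArg (v ∈ ·) (glue_bag_castAdd a))
  · exact iff_of_eq (congrArg (v ∈ ·) (glue_bag_natAdd b))

end Decomp

section Components

variable {α : Type} {H : FinHypergraph α} {W C C' : Finset α}

lemma HConn.symm {x y : α} (h : HConn H W x y) : HConn H W y x :=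
  (@Relation.ReflTransGen.stdSymm _ _
    ⟨fun _ _ ⟨ha, hb, e, he, hae, hbe⟩ => ⟨hb, ha, e, he, hbe, hae⟩⟩).symm _ _ h

lemma exists_isComponent_mem {v : α} (hv : v ∈ W) : ∃ C, IsComponent H W C ∧ v ∈ C := by
  classical
  have hvC : v ∈ W.filter (HConn H W v) := Finset.mem_filter.mpr ⟨hv, .refl⟩
  refine ⟨_, ⟨⟨v, hvC⟩, Finset.filter_subset _ _, fun x hx y hy => ?_,
    fun x hx y hy hxy => ?_⟩, hvC⟩
  · exact (Finset.mem_filter.mp hx).2.symm.trans (Finset.mem_filter.mp hy).2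
  · exact Finset.mem_filter.mpr ⟨hy, (Finset.mem_filter.mp hx).2.trans hxy⟩

lemma IsComponent.subset_of_mem (hC : IsComponent H W C) (hC' : IsComponent H W C') {v : α}
    (hv : v ∈ C) (hv' : v ∈ C') : C ⊆ C' :=
  fun x hx => hC'.2.2.2 v hv' x (hC.2.1 hx) (hC.2.2.1 v hv x hx)

lemma IsComponent.eq_of_mem (hC : IsComponent H W C) (hC' : IsComponent H W C') {v : α}
    (hv : v ∈ C) (hv' : v ∈ C') : C = C' :=
  (hC.subset_of_mem hC' hv hv').antisymm (hC'.subset_of_mem hC hv' hv)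

lemma IsComponent.mem_of_mem_edge (hC : IsComponent H W C) {e : Finset α} (he : e ∈ H.edges)
    {y v : α} (hy : y ∈ e) (hyC : y ∈ C) (hv : v ∈ e) (hvW : v ∈ W) : v ∈ C :=
  hC.2.2.2 y hyC v hvW (.single ⟨hC.2.1 hyC, hvW, e, he, hy, hv⟩)

end Components

section Gluing

variable {α : Type} [DecidableEq α]

def FinHypergraph.componentHypergraph (H : FinHypergraph α) (B C : Finset α) (hB : B.Nonempty) :
    FinHypergraph α where
  verts := B ∪ (H.edges.filter fun e => (e ∩ C).Nonempty).biUnion id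
  edges := insert B (H.edges.filter fun e => (e ∩ C).Nonempty)
  nonempty_of_mem e he := by
    rcases Finset.mem_insert.mp he with rfl | he
    · exact hB
    · exact H.nonempty_of_mem e (Finset.mem_filter.mp he).1
  subset_verts e he := by
    rcases Finset.mem_insert.mp he with rfl | he
    · exact Finset.subset_union_left
    · exact (Finset.subset_biUnion_of_mem id he).trans Finset.subset_union_right

lemma Decomp.IsGHD.exists_edge_mem {H : FinHypergraph α} {D : Decomp α} (hD : D.IsGHD H)
    {u : Fin D.n} {v : α} (hv : v ∈ D.bag u) : ∃ e ∈ H.edges, v ∈ e := by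
  obtain ⟨e, he, hve⟩ := Finset.mem_biUnion.mp (hD.2.2.2.2 u hv)
  exact ⟨e, hD.2.2.2.1 u he, hve⟩

lemma IsComponent.mem_of_mem_bag {H : FinHypergraph α} {B C : Finset α} {hB : B.Nonempty}
    (hC : IsComponent H (H.verts \ B) C) {D : Decomp α}
    (hD : D.IsGHD (H.componentHypergraph B C hB)) {u : Fin D.n} {v : α} (hv : v ∈ D.bag u)
    (hvB : v ∉ B) : v ∈ C := by
  obtain ⟨e, he, hve⟩ := hD.exists_edge_mem hv
  rcases Finset.mem_insert.mp he with rfl | he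
  · exact absurd hve hvB
  obtain ⟨heH, y, hy⟩ := Finset.mem_filter.mp he
  rw [Finset.mem_inter] at hy
  exact hC.mem_of_mem_edge heH hy.1 hy.2 hve
    (Finset.mem_sdiff.mpr ⟨H.subset_verts e heH hve, hvB⟩)

lemma Decomp.IsGHD.cover_subset_of_notMem {H : FinHypergraph α} {B C : Finset α}
    {hB : B.Nonempty} {D : Decomp α} (hD : D.IsGHD (H.componentHypergraph B C hB)) {u : Fin D.n}
    (hBu : B ∉ D.cover u) : D.cover u ⊆ H.edges := fun e he => by
  rcases Finset.mem_insert.mp (hD.2.2.2.1 u he) with rfl | he'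
  · exact absurd he hBu
  · exact (Finset.mem_filter.mp he').1

structure Decomp.IsRootedPartialGHD (H : FinHypergraph α) (k : ℕ) (B : Finset α)
    (S : Finset (Finset α)) (D : Decomp α) : Prop where
  isTree : D.tree.IsTree
  bag_root : D.bag D.root = B
  cover_subset : ∀ u, D.cover u ⊆ H.edges
  card_cover_le : ∀ u, (D.cover u).card ≤ k
  bag_subset : ∀ u, D.bag u ⊆ (D.cover u).biUnion id
  preconnected : ∀ v, (D.tree.induce {u | v ∈ D.bag u}).Preconnected
  exists_bag : ∀ C ∈ S, ∀ e ∈ H.edges, (e ∩ C).Nonempty → ∃ u, e ⊆ D.bag u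
  exists_mem_of_mem_bag : ∀ u, ∀ v ∈ D.bag u, v ∉ B → ∃ C ∈ S, v ∈ C

namespace Decomp.IsRootedPartialGHD

variable {H : FinHypergraph α} {k : ℕ} {B : Finset α} {S : Finset (Finset α)} {D : Decomp α}

lemma single {L : Finset (Finset α)} (hL : L ⊆ H.edges) (hLk : L.card ≤ k)
    (hBL : B ⊆ L.biUnion id) :
    IsRootedPartialGHD H k B ∅ ⟨1, ⊥, 0, fun _ => B, fun _ => L⟩ where
  isTree := .of_subsingleton
  bag_root := rfl
  cover_subset _ := hL
  card_cover_le _ := hLk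
  bag_subset _ := hBL
  preconnected _ := .of_subsingleton
  exists_bag := by simp
  exists_mem_of_mem_bag _ _ hv hvB := absurd hv hvB

lemma isGHD (hD : D.IsRootedPartialGHD H k B S)
    (hS : ∀ C, IsComponent H (H.verts \ B) C → C ∈ S) : D.IsGHD H := by
  refine ⟨hD.isTree, fun e he => ?_, hD.preconnected, hD.cover_subset, hD.bag_subset⟩
  by_cases heB : e ⊆ B
  · exact ⟨D.root, hD.bag_root ▸ heB⟩
  obtain ⟨v, hve, hvB⟩ := Finset.not_subset.mp heB
  obtain ⟨C, hC, hvC⟩ := exists_isComponent_mem (H := H)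
    (Finset.mem_sdiff.mpr ⟨H.subset_verts e he hve, hvB⟩)
  exact hD.exists_bag C (hS C hC) e he ⟨v, Finset.mem_inter.mpr ⟨hve, hvC⟩⟩

lemma mem_of_mem_bag_of_mem_bag (hD : D.IsRootedPartialGHD H k B S)
    (hS : ∀ C ∈ S, IsComponent H (H.verts \ B) C) {C : Finset α} {hB : B.Nonempty}
    (hC : IsComponent H (H.verts \ B) C) (hCS : C ∉ S) {Dc : Decomp α}
    (hDc : Dc.IsGHD (H.componentHypergraph B C hB)) {a : Fin D.n} {b : Fin Dc.n} {v : α}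
    (ha : v ∈ D.bag a) (hb : v ∈ Dc.bag b) : v ∈ B := by
  by_contra hvB
  obtain ⟨C', hC', hvC'⟩ := hD.exists_mem_of_mem_bag a v ha hvB
  exact hCS (hC.eq_of_mem (hS C' hC') (hC.mem_of_mem_bag hDc hb hvB) hvC' ▸ hC')

lemma glue (hD : D.IsRootedPartialGHD H k B S)
    (hS : ∀ C ∈ S, IsComponent H (H.verts \ B) C) {C : Finset α} {hB : B.Nonempty}
    (hC : IsComponent H (H.verts \ B) C) (hCS : C ∉ S) {Dc : Decomp α}
    (hDc : Dc.IsGHD (H.componentHypergraph B C hB)) (hDck : ∀ u, (Dc.cover u).card ≤ k)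
    {t : Fin Dc.n} (ht : Dc.bag t = B) (hBt : ∀ u ≠ t, B ∉ Dc.cover u) :
    (D.glue { Dc with cover := Function.update Dc.cover t (D.cover D.root) } t).IsRootedPartialGHD
      H k B (insert C S) := by
  have hroot := hD.bag_subset D.root
  rw [hD.bag_root] at hroot
  have hDv (v a b) (ha : v ∈ D.bag a) (hb : v ∈ Dc.bag b) :
      v ∈ D.bag D.root ∧ v ∈ Dc.bag t :=
    have hvB := hD.mem_of_mem_bag_of_mem_bag hS hC hCS hDc ha hb
    ⟨hD.bag_root ▸ hvB, ht ▸ hvB⟩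
  refine ⟨glue_isTree hD.isTree hDc.1, by simpa using hD.bag_root, ?_, ?_, ?_,
    fun v => glue_preconnected (hD.preconnected v) (hDc.2.2.1 v) (hDv v), ?_, ?_⟩
  · refine (Fin.forall_fin_add _).mpr ⟨fun a => by simpa using hD.cover_subset a, fun b => ?_⟩
    by_cases hb : b = t
    · simpa [hb] using hD.cover_subset D.root
    · simpa [hb] using hDc.cover_subset_of_notMem (hBt b hb)
  · refine (Fin.forall_fin_add _).mpr ⟨fun a => by simpa using hD.card_cover_le a, fun b => ?_⟩
    by_cases hb : b = t
    · simpa [hb] using hD.card_cover_le D.root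
    · simpa [hb] using hDck b
  · refine (Fin.forall_fin_add _).mpr ⟨fun a => by simpa using hD.bag_subset a, fun b => ?_⟩
    by_cases hb : b = t
    · simpa [hb, ht] using hroot
    · simpa [hb] using hDc.2.2.2.2 b
  · intro C' hC' e he heC'
    rcases Finset.mem_insert.mp hC' with rfl | hC'
    · obtain ⟨b, hb⟩ :=
        hDc.2.1 e (Finset.mem_insert_of_mem (Finset.mem_filter.mpr ⟨he, heC'⟩))
      exact ⟨Fin.natAdd D.n b, by simpa using hb⟩
    · obtain ⟨a, ha⟩ := hD.exists_bag C' hC' e he heC'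
      exact ⟨Fin.castAdd Dc.n a, by simpa using ha⟩
  · refine (Fin.forall_fin_add _).mpr ⟨fun a v hv hvB => ?_, fun b v hv hvB => ?_⟩
    · obtain ⟨C', hC', hvC'⟩ := hD.exists_mem_of_mem_bag a v (by simpa using hv) hvB
      exact ⟨C', Finset.mem_insert_of_mem hC', hvC'⟩
    · exact ⟨C, Finset.mem_insert_self C S, hC.mem_of_mem_bag hDc (by simpa using hv) hvB⟩

end Decomp.IsRootedPartialGHD

lemma exists_isRootedPartialGHD {H : FinHypergraph α} {k : ℕ} {B : Finset α} (hB : B.Nonempty)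
    {L : Finset (Finset α)} (hL : L ⊆ H.edges) (hLk : L.card ≤ k) (hBL : B ⊆ L.biUnion id)
    (hcomp : ∀ C, IsComponent H (H.verts \ B) C → ∃ Dc : Decomp α,
      Dc.IsGHD (H.componentHypergraph B C hB) ∧ (∀ u, (Dc.cover u).card ≤ k) ∧
      ∃ t, Dc.bag t = B ∧ ∀ u ≠ t, B ∉ Dc.cover u)
    (S : Finset (Finset α)) (hS : ∀ C ∈ S, IsComponent H (H.verts \ B) C) :
    ∃ D : Decomp α, D.IsRootedPartialGHD H k B S := by
  induction S using Finset.induction_on with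
  | empty => exact ⟨_, .single hL hLk hBL⟩
  | insert C S hCS ih =>
    have hS' : ∀ C ∈ S, IsComponent H (H.verts \ B) C := fun C' hC' =>
      hS C' (Finset.mem_insert_of_mem hC')
    obtain ⟨D, hD⟩ := ih hS'
    have hC := hS C (Finset.mem_insert_self C S)
    obtain ⟨Dc, hDc, hDck, t, ht, hBt⟩ := hcomp C hC
    exact ⟨_, hD.glue hS' hC hCS hDc hDck ht hBt⟩

end Gluing

theorem ghd_gluing_general (H : FinHypergraph V) (k : ℕ)
    (B : Finset V) (hBne : B.Nonempty)
    (hcov : ∃ L : Finset (Finset V), L ⊆ H.edges ∧ L.card ≤ k ∧ B ⊆ L.biUnion id)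
    (hrec : ∀ C : Finset V, IsComponent H (H.verts \ B) C →
      ∀ H' : FinHypergraph V,
        H'.verts = B ∪ (H.edges.filter fun e => (e ∩ C).Nonempty).biUnion id →
        H'.edges = insert B (H.edges.filter fun e => (e ∩ C).Nonempty) →
        ∃ D : Decomp V, D.IsGHD H' ∧ (∀ u, (D.cover u).card ≤ k) ∧
          ∃ t : Fin D.n,
            (∀ w w', D.tree.Adj t w → D.tree.Adj t w' → w = w') ∧
            D.bag t = B ∧ D.cover t = {B} ∧
            (∀ u, u ≠ t → B ∉ D.cover u)) :
    ∃ D : Decomp V, D.IsGHD H ∧ ∀ u, (D.cover u).card ≤ k := by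
  classical
  obtain ⟨L, hL, hLk, hBL⟩ := hcov
  have hcomp (C) (hC : IsComponent H (H.verts \ B) C) : ∃ Dc : Decomp V,
      Dc.IsGHD (H.componentHypergraph B C hBne) ∧ (∀ u, (Dc.cover u).card ≤ k) ∧
      ∃ t, Dc.bag t = B ∧ ∀ u ≠ t, B ∉ Dc.cover u := by
    obtain ⟨Dc, hDc, hDck, t, -, ht, -, hBt⟩ :=
      hrec C hC (H.componentHypergraph B C hBne) rfl rfl
    exact ⟨Dc, hDc, hDck, t, ht, hBt⟩
  set comps := (H.verts \ B).powerset.filter (IsComponent H (H.verts \ B))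
  obtain ⟨D, hD⟩ := exists_isRootedPartialGHD hBne hL hLk hBL hcomp comps
    fun C hC => (Finset.mem_filter.mp hC).2
  exact ⟨D, hD.isGHD fun C hC => Finset.mem_filter.mpr ⟨Finset.mem_powerset.mpr hC.2.1, hC⟩,
    hD.card_cover_le⟩

/-- Gluing lemma for GHDs: if `B ⊆ V(H)` is covered by at most `k` edges and, for every
connected component `C` of the subhypergraph induced on `V(H) \ B`, the hypergraph
`H_C = (B ∪ ⋃{e : e ∩ C ≠ ∅}, {e : e ∩ C ≠ ∅} ∪ {B})` has a GHD of width `≤ k` with a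
leaf node `t` whose bag is `B`, whose label is exactly `{B}`, and such that no other node
uses the edge `B`, then `H` has a GHD of width `≤ k`. -/
theorem ghd_gluing (H : FinHypergraph V) (k : ℕ) (hk : 1 ≤ k)
    (B : Finset V) (hBV : B ⊆ H.verts) (hBne : B.Nonempty)
    (hcov : ∃ L : Finset (Finset V), L ⊆ H.edges ∧ L.card ≤ k ∧ B ⊆ L.biUnion id)
    (hrec : ∀ C : Finset V, IsComponent H (H.verts \ B) C →
      ∀ H' : FinHypergraph V,
        H'.verts = B ∪ (H.edges.filter fun e => (e ∩ C).Nonempty).biUnion id →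
        H'.edges = insert B (H.edges.filter fun e => (e ∩ C).Nonempty) →
        ∃ D : Decomp V, D.IsGHD H' ∧ (∀ u, (D.cover u).card ≤ k) ∧
          ∃ t : Fin D.n,
            (∀ w w', D.tree.Adj t w → D.tree.Adj t w' → w = w') ∧
            D.bag t = B ∧ D.cover t = {B} ∧
            (∀ u, u ≠ t → B ∉ D.cover u)) :
    ∃ D : Decomp V, D.IsGHD H ∧ ∀ u, (D.cover u).card ≤ k :=
  ghd_gluing_general H k B hBne hcov hrec
end

section
/- Normal-form GHDs after adding subedges: let H = (V(H), E(H)) be a hypergraph, k ≥ 1, and H' = (V(H), E(H) ∪ f(H,k)). If ghw(H) ≤ k, then H' has a GHD ⟨T, (B_u), (λ_u)⟩ of width ≤ k in which B_u = B(λ_u) holds for every node u. -/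
variable {V : Type} [DecidableEq V]

/-- The set `f(H,k)` of subedges: all nonempty subsets of sets of the form
`e ∩ (e₁ ∪ ⋯ ∪ e_j)` with `e ∈ E(H)`, `j ≤ k` and `e₁, …, e_j ∈ E(H) \ {e}`. -/
def fsub (H : FinHypergraph V) (k : ℕ) : Finset (Finset V) :=
  H.edges.biUnion fun e =>
    (((H.edges.erase e).powerset.filter fun F => F.card ≤ k).biUnion fun F =>
      (e ∩ F.biUnion id).powerset.filter fun s => s.Nonempty)

namespace SimpleGraph

variable {α : Type*} {G : SimpleGraph α}

lemma preconnected_induce_of_subset {S T : Set α} (hST : S ⊆ T)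
    (hS : (G.induce S).Preconnected)
    (hT : ∀ a : T, ∃ b : S, (G.induce T).Reachable a (G.induceHomOfLE hST b)) :
    (G.induce T).Preconnected := by
  intro a a'
  obtain ⟨b, hb⟩ := hT a
  obtain ⟨b', hb'⟩ := hT a'
  exact hb.trans (((hS b b').map (G.induceHomOfLE hST).toHom).trans hb'.symm)

lemma IsAcyclic.mem_of_mem_support_path [DecidableEq α] (hG : G.IsAcyclic) {S : Set α}
    (hS : (G.induce S).Preconnected) {a b : α} (ha : a ∈ S) (hb : b ∈ S) (p : G.Path a b)
    {x : α} (hx : x ∈ p.1.support) : x ∈ S := by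
  obtain ⟨q⟩ := hS ⟨a, ha⟩ ⟨b, hb⟩
  set r := q.map (Embedding.induce S).toHom
  have hxr : x ∈ r.support := by
    rw [← (hG.subsingleton_path a b).elim r.toPath p] at hx
    exact r.support_toPath_subset_support hx
  rw [Walk.support_map, List.mem_map] at hxr
  obtain ⟨y, -, rfl⟩ := hxr
  exact y.2

end SimpleGraph

open SimpleGraph

lemma mem_fsub_of_subset_inter {H : FinHypergraph V} {k : ℕ} {s e : Finset V}
    {F : Finset (Finset V)} (he : e ∈ H.edges) (hF : F ⊆ H.edges) (heF : e ∉ F)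
    (hFk : F.card ≤ k) (hs : s ⊆ e ∩ F.biUnion id) (hne : s.Nonempty) : s ∈ fsub H k := by
  refine Finset.mem_biUnion.2 ⟨e, he, Finset.mem_biUnion.2 ⟨F, ?_, ?_⟩⟩
  · exact Finset.mem_filter.2 ⟨Finset.mem_powerset.2
      (fun x hx => Finset.mem_erase.2 ⟨fun h => heF (h ▸ hx), hF hx⟩), hFk⟩
  · exact Finset.mem_filter.2 ⟨Finset.mem_powerset.2 hs, hne⟩

lemma exists_edge_superset_of_mem_union_fsub {H : FinHypergraph V} {k : ℕ} {s : Finset V}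
    (hs : s ∈ H.edges ∪ fsub H k) : ∃ e ∈ H.edges, s ⊆ e := by
  rcases Finset.mem_union.1 hs with hs | hs
  · exact ⟨s, hs, subset_rfl⟩
  obtain ⟨e, he, hs⟩ := Finset.mem_biUnion.1 hs
  obtain ⟨F, -, hs⟩ := Finset.mem_biUnion.1 hs
  exact ⟨e, he, (Finset.mem_powerset.1 (Finset.mem_filter.1 hs).1).trans Finset.inter_subset_left⟩

namespace Decomp

abbrev single (H : FinHypergraph V) : Decomp V where
  n := 1
  tree := ⊥
  root := 0
  bag := fun _ => H.edges.biUnion id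
  cover := fun _ => H.edges

lemma single_isGHD (H : FinHypergraph V) : (single H).IsGHD H :=
  ⟨⟨⟨preconnected_bot⟩, isAcyclic_bot⟩,
    fun _ he => ⟨0, Finset.subset_biUnion_of_mem id he⟩,
    fun _ => Preconnected.of_subsingleton, fun _ => subset_rfl, fun _ => subset_rfl⟩

lemma exists_ghd_of_ghw_le {H : FinHypergraph V} {k : ℕ} (h : ghw H ≤ k) :
    ∃ D : Decomp V, D.IsGHD H ∧ ∀ u, (D.cover u).card ≤ k := by
  have hne : {m | ∃ D : Decomp V, D.IsGHD H ∧ ∀ u, (D.cover u).card ≤ m}.Nonempty :=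
    ⟨H.edges.card, single H, single_isGHD H, fun _ => le_rfl⟩
  obtain ⟨D, hD, hwidth⟩ := Nat.sInf_mem hne
  exact ⟨D, hD, fun u => (hwidth u).trans h⟩

variable (D : Decomp V)

def Anchored (e : Finset V) (u : Fin D.n) : Prop :=
  e ∈ D.cover u ∧ ∃ w, e ⊆ D.bag w ∧ ∃ p : D.tree.Walk u w, ∀ x ∈ p.support, e ∈ D.cover x

open Classical in
noncomputable def normalCover (u : Fin D.n) : Finset (Finset V) :=
  ((D.cover u).image fun e => if D.Anchored e u then e else e ∩ D.bag u).filter (·.Nonempty)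

noncomputable def normalize : Decomp V where
  n := D.n
  tree := D.tree
  root := D.root
  bag := fun u => (D.normalCover u).biUnion id
  cover := D.normalCover

variable {D}

lemma card_normalCover_le (u : Fin D.n) : (D.normalCover u).card ≤ (D.cover u).card :=
  (Finset.card_filter_le _ _).trans Finset.card_image_le

lemma mem_normalize_bag_iff {u : Fin D.n} (hb : D.bag u ⊆ (D.cover u).biUnion id) {v : V} :
    v ∈ D.normalize.bag u ↔ v ∈ D.bag u ∨ ∃ e, D.Anchored e u ∧ v ∈ e := by
  classical
  simp only [normalize, normalCover, Finset.mem_biUnion, Finset.mem_filter, Finset.mem_image, id]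
  constructor
  · rintro ⟨s, ⟨⟨e, he, rfl⟩, -⟩, hv⟩
    split_ifs at hv with hz
    · exact Or.inr ⟨e, hz, hv⟩
    · exact Or.inl (Finset.mem_inter.1 hv).2
  · rintro (hv | ⟨e, hz, hv⟩)
    · obtain ⟨e, he, hve⟩ := Finset.mem_biUnion.1 (hb hv)
      by_cases hz : D.Anchored e u
      · exact ⟨e, ⟨⟨e, he, if_pos hz⟩, v, hve⟩, hve⟩
      · have hv' : v ∈ e ∩ D.bag u := Finset.mem_inter.2 ⟨hve, hv⟩
        exact ⟨e ∩ D.bag u, ⟨⟨e, he, if_neg hz⟩, v, hv'⟩, hv'⟩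
    · exact ⟨e, ⟨⟨e, hz.1, if_pos hz⟩, v, hv⟩, hv⟩

variable {H : FinHypergraph V}

lemma bag_subset_normalize_bag (hD : D.IsGHD H) (u : Fin D.n) :
    D.bag u ⊆ D.normalize.bag u :=
  fun _ hv => (mem_normalize_bag_iff (hD.2.2.2.2 u)).2 (Or.inl hv)

lemma normalize_preconnected (hD : D.IsGHD H) (v : V) :
    (D.normalize.tree.induce {u | v ∈ D.normalize.bag u}).Preconnected := by
  refine preconnected_induce_of_subset (fun u hu => bag_subset_normalize_bag hD u hu)
    (hD.2.2.1 v) fun ⟨a, ha⟩ => ?_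
  rcases (mem_normalize_bag_iff (hD.2.2.2.2 a)).1 ha with ha' | ⟨e, ⟨-, w, hw, p, hp⟩, hve⟩
  · exact ⟨⟨a, ha'⟩, Reachable.refl _⟩
  · have hpT : ∀ x ∈ p.support, x ∈ {u | v ∈ D.normalize.bag u} := fun x hx =>
      (mem_normalize_bag_iff (hD.2.2.2.2 x)).2 (Or.inr ⟨e, ⟨hp x hx, w, hw, p.dropUntil x hx,
        fun _ hy => hp _ (p.support_dropUntil_subset_support hx hy)⟩, hve⟩)
    exact ⟨⟨w, hw hve⟩, ⟨p.induce _ hpT⟩⟩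

lemma inter_bag_mem_fsub {k : ℕ} (hD : D.IsGHD H) (hwidth : ∀ u, (D.cover u).card ≤ k)
    {e : Finset V} {u : Fin D.n} (he : e ∈ D.cover u) (hna : ¬ D.Anchored e u)
    (hne : (e ∩ D.bag u).Nonempty) : e ∩ D.bag u ∈ fsub H k := by
  obtain ⟨hT, hcover, hconn, hcov, hbag⟩ := hD
  have heH : e ∈ H.edges := hcov u he
  obtain ⟨w, hw⟩ := hcover e heH
  obtain ⟨q⟩ := hT.connected.preconnected u w
  obtain ⟨x, hxq, hxe⟩ : ∃ x ∈ q.toPath.1.support, e ∉ D.cover x := by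
    by_contra! h
    exact hna ⟨he, w, hw, q.toPath, h⟩
  have hsub : e ∩ D.bag u ⊆ D.bag x := fun v hv =>
    have hv := Finset.mem_inter.1 hv
    hT.isAcyclic.mem_of_mem_support_path (hconn v) hv.2 (hw hv.1) q.toPath hxq
  refine mem_fsub_of_subset_inter heH (hcov x) hxe (hwidth x) (fun v hv => ?_) hne
  exact Finset.mem_inter.2 ⟨(Finset.mem_inter.1 hv).1, hbag x (hsub hv)⟩

lemma normalCover_subset {k : ℕ} (hD : D.IsGHD H) (hwidth : ∀ u, (D.cover u).card ≤ k)
    (u : Fin D.n) : D.normalCover u ⊆ H.edges ∪ fsub H k := by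
  intro s hs
  simp only [normalCover, Finset.mem_filter, Finset.mem_image] at hs
  obtain ⟨⟨e, he, rfl⟩, hne⟩ := hs
  split_ifs at hne ⊢ with hz
  · exact Finset.mem_union_left _ (hD.2.2.2.1 u he)
  · exact Finset.mem_union_right _ (inter_bag_mem_fsub hD hwidth he hz hne)

end Decomp

open Decomp in
theorem exists_normal_form_ghd_general (H : FinHypergraph V) (k : ℕ)
    (H' : FinHypergraph V)
    (he : H'.edges = H.edges ∪ fsub H k)
    (hghw : ghw H ≤ k) :
    ∃ D : Decomp V, D.IsGHD H' ∧ (∀ u, (D.cover u).card ≤ k) ∧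
      ∀ u, D.bag u = (D.cover u).biUnion id := by
  obtain ⟨D, hD, hwidth⟩ := exists_ghd_of_ghw_le hghw
  have hcover : ∀ e ∈ H'.edges, ∃ u, e ⊆ D.normalize.bag u := by
    intro e he'
    rw [he] at he'
    obtain ⟨e₀, he₀, hee₀⟩ := exists_edge_superset_of_mem_union_fsub he'
    obtain ⟨u, hu⟩ := hD.2.1 e₀ he₀
    exact ⟨u, (hee₀.trans hu).trans (bag_subset_normalize_bag hD u)⟩
  refine ⟨D.normalize, ⟨hD.1, hcover, normalize_preconnected hD, fun u => ?_,
    fun _ => subset_rfl⟩, fun u => (card_normalCover_le (D := D) u).trans (hwidth u), fun _ => rfl⟩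
  rw [he]
  exact normalCover_subset hD hwidth u

/-- Normal-form GHDs after adding subedges: if `ghw(H) ≤ k` with `k ≥ 1`, then
`H' = (V(H), E(H) ∪ f(H,k))` has a GHD of width `≤ k` with `B_u = B(λ_u)` at every node. -/
theorem exists_normal_form_ghd (H : FinHypergraph V) (k : ℕ) (hk : 1 ≤ k)
    (H' : FinHypergraph V) (hv : H'.verts = H.verts)
    (he : H'.edges = H.edges ∪ fsub H k)
    (hghw : ghw H ≤ k) :
    ∃ D : Decomp V, D.IsGHD H' ∧ (∀ u, (D.cover u).card ≤ k) ∧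
      ∀ u, D.bag u = (D.cover u).biUnion id :=
  exists_normal_form_ghd_general H k H' he hghw
end

section
/- The bounded multi-intersection property implies bounded VC-dimension: if for some c ≥ 2 the c-multi-intersection width of a hypergraph H is at most i (i.e., any c pairwise distinct edges of H intersect in at most i vertices), then the VC-dimension of H is at most i + c − 1. -/
variable {V : Type} [DecidableEq V]

/-- `X` is shattered by the edges of `H`: every subset of `X` arises as the trace `X ∩ e`
of some edge `e` (i.e. `E(H)|_X = 2^X`). -/
def Shattered (H : FinHypergraph V) (X : Finset V) : Prop :=
  ∀ Y ⊆ X, ∃ e ∈ H.edges, X ∩ e = Y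

/-!
If `|X| ≥ i + c` and `X` is shattered, fix `S ⊆ X` with `|S| = i + 1`. Since `X \ S` has at
least `c - 1` elements, there are `c` distinct sets `S ∪ U` with `U ⊆ X \ S`, one of each size
`0, …, c - 1`. Shattering realises them as traces `X ∩ e` of `c` distinct edges, and all of
these edges contain `S`, so their common intersection has more than `i` vertices.
-/

open Finset

theorem exists_injective_family_between {S X : Finset V} (hSX : S ⊆ X) {n : ℕ}
    (hn : n ≤ #(X \ S) + 1) :
    ∃ Y : Fin n → Finset V, Function.Injective Y ∧ ∀ t, S ⊆ Y t ∧ Y t ⊆ X := by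
  have hU : ∀ t : Fin n, ∃ U ⊆ X \ S, #U = t := fun t =>
    exists_subset_card_eq (by omega)
  choose U hUsub hUcard using hU
  have hcard : ∀ t, #(S ∪ U t) = #S + t := fun t => by
    rw [card_union_of_disjoint (disjoint_of_subset_right (hUsub t) disjoint_sdiff), hUcard]
  refine ⟨fun t => S ∪ U t, fun a b hab => Fin.ext ?_, fun t => ⟨subset_union_left, ?_⟩⟩
  · have := congrArg card hab
    simp only [hcard] at this
    omega
  · exact union_subset hSX ((hUsub t).trans sdiff_subset)

theorem Shattered.exists_injective_edges {H : FinHypergraph V} {X : Finset V}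
    (hX : Shattered H X) {ι : Type*} (Y : ι → Finset V) (hY : Function.Injective Y)
    (hYX : ∀ t, Y t ⊆ X) :
    ∃ es : ι → Finset V, (∀ t, es t ∈ H.edges) ∧ Function.Injective es ∧
      ∀ t, X ∩ es t = Y t := by
  choose es hes htrace using fun t => hX (Y t) (hYX t)
  exact ⟨es, hes, fun a b hab => hY (by rw [← htrace, hab, htrace]), htrace⟩

/-- The bounded multi-intersection property implies bounded VC-dimension: if any `c`
pairwise distinct edges of `H` (with `c ≥ 2`) intersect in at most `i` vertices, then
every shattered subset of `V(H)` has cardinality at most `i + c - 1`. -/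
theorem vc_dim_le_of_multi_intersection (H : FinHypergraph V) (c i : ℕ) (hc : 2 ≤ c)
    (hmiw : ∀ es : Fin c → Finset V, (∀ t, es t ∈ H.edges) → Function.Injective es →
      (H.verts.filter fun v => ∀ t, v ∈ es t).card ≤ i) :
    ∀ X : Finset V, X ⊆ H.verts → Shattered H X → X.card ≤ i + c - 1 := by
  intro X hXv hX
  by_contra! hlt
  obtain ⟨S, hSX, hS⟩ := exists_subset_card_eq (show i + 1 ≤ #X by omega)
  obtain ⟨Y, hYinj, hY⟩ := exists_injective_family_between (n := c) hSX
    (by rw [card_sdiff_of_subset hSX]; omega)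
  obtain ⟨es, hes, hinj, htrace⟩ := hX.exists_injective_edges Y hYinj fun t => (hY t).2
  have hS_common : S ⊆ H.verts.filter fun v => ∀ t, v ∈ es t := fun v hv =>
    mem_filter.mpr ⟨hXv (hSX hv), fun t => (mem_inter.mp (htrace t ▸ (hY t).1 hv)).2⟩
  have := card_le_card hS_common
  have := hmiw es hes hinj
  omega
end
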